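/- Fix c ∈ K and consider the 2-component equation (new integrable equation (dtmv)): 𝔽¹ = 2u²₋₁·(u¹₀)² − 2c·u¹₀ − 2(u¹₁·u²₀·u¹₀ + u¹₁ − c·u¹₀ − α₀·u¹₀)/(u¹₀·u²₀ + 1), 𝔽² = 2u²₋₁ − 2α₀·u²₀ − 2(u²₀)²·(u¹₁·u²₀·u¹₀ + u¹₁ − c·u¹₀ − α₀·u¹₀)/(u¹₀·u²₀ + 1). Then the matrices M = [[(u¹₀·u²₀·λ + λ + α₀ − c·u¹₀·u²₀)/(u¹₀·u²₀ + 1), (λ − c)·u¹₀],[u²₀, u¹₀·u²₀ + 1]] and U = [[2u¹₀·u²₋₁ − λ, 2(c − λ)·u¹₀],[−2u²₋₁, λ − 2u¹₀·u²₋₁]] form an MLR for this equation: D_t(M) = S(U)·M − M·U. -/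

import Mathlib

open MvPolynomial

/-- Variables: `none` is `λ`; `some (none, ℓ)` is `α_ℓ`; `some (some j, ℓ)` is `u^j_ℓ`. -/
abbrev VarA := Option (Option (Fin 2) × ℤ)

/-- Polynomial ring over `K` in `λ`, `α_ℓ`, `u¹_ℓ`, `u²_ℓ`. -/
abbrev PolyA (K : Type) [Field K] := MvPolynomial VarA K

/-- Field of rational functions over `K` in `λ`, `α_ℓ`, `u¹_ℓ`, `u²_ℓ`. -/
abbrev FA (K : Type) [Field K] := FractionRing (PolyA K)

/-- The spectral parameter `λ`. -/
noncomputable def lam (K : Type) [Field K] : FA K :=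
  algebraMap (PolyA K) (FA K) (X none)

/-- The variable `α_ℓ` (playing the role of `α(n+ℓ)`). -/
noncomputable def al (K : Type) [Field K] (ℓ : ℤ) : FA K :=
  algebraMap (PolyA K) (FA K) (X (some (none, ℓ)))

/-- The variable `u¹_ℓ`. -/
noncomputable def U1 (K : Type) [Field K] (ℓ : ℤ) : FA K :=
  algebraMap (PolyA K) (FA K) (X (some (some 0, ℓ)))

/-- The variable `u²_ℓ`. -/
noncomputable def U2 (K : Type) [Field K] (ℓ : ℤ) : FA K :=
  algebraMap (PolyA K) (FA K) (X (some (some 1, ℓ)))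

/-- `𝔽¹` of equation (dtmv). -/
noncomputable def Feq1 (K : Type) [Field K] (c : K) : FA K :=
  2 * U2 K (-1) * (U1 K 0) ^ 2 - 2 * algebraMap K (FA K) c * U1 K 0 -
    2 * (U1 K 1 * U2 K 0 * U1 K 0 + U1 K 1 - algebraMap K (FA K) c * U1 K 0 -
      al K 0 * U1 K 0) / (U1 K 0 * U2 K 0 + 1)

/-- `𝔽²` of equation (dtmv). -/
noncomputable def Feq2 (K : Type) [Field K] (c : K) : FA K :=
  2 * U2 K (-1) - 2 * al K 0 * U2 K 0 -
    2 * (U2 K 0) ^ 2 * (U1 K 1 * U2 K 0 * U1 K 0 + U1 K 1 - algebraMap K (FA K) c * U1 K 0 -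
      al K 0 * U1 K 0) / (U1 K 0 * U2 K 0 + 1)

/-- The matrix `M` of the MLR for equation (dtmv). -/
noncomputable def Mdtmv (K : Type) [Field K] (c : K) : Matrix (Fin 2) (Fin 2) (FA K) :=
  !![(U1 K 0 * U2 K 0 * lam K + lam K + al K 0 -
        algebraMap K (FA K) c * U1 K 0 * U2 K 0) / (U1 K 0 * U2 K 0 + 1),
      (lam K - algebraMap K (FA K) c) * U1 K 0;
    U2 K 0, U1 K 0 * U2 K 0 + 1]

/-- The matrix `U` of the MLR for equation (dtmv). -/
noncomputable def Udtmv (K : Type) [Field K] (c : K) : Matrix (Fin 2) (Fin 2) (FA K) :=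
  !![2 * U1 K 0 * U2 K (-1) - lam K, 2 * (algebraMap K (FA K) c - lam K) * U1 K 0;
    -(2 * U2 K (-1)), lam K - 2 * U1 K 0 * U2 K (-1)]

/-!
`D_t` enters only through the Leibniz rule and `D_t(u^j_0) = 𝔽^j`, and `S` only through
`u¹₀ ↦ u¹₁`, `u²₋₁ ↦ u²₀` in `U`; so after clearing the one denominator `u¹₀u²₀ + 1`, each
entry of `D_t(M) = S(U)M − MU` is a polynomial identity. Moreover `det M = λ + α₀ ≠ 0`.
-/

structure IsAddLeibniz {R : Type*} [Ring R] (D : R → R) : Prop where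
  map_add : ∀ x y, D (x + y) = D x + D y
  map_mul : ∀ x y, D (x * y) = x * D y + D x * y

namespace IsAddLeibniz

section Ring

variable {R : Type*} [Ring R] {D : R → R}

theorem map_zero (hD : IsAddLeibniz D) : D 0 = 0 := by
  simpa using hD.map_add 0 0

theorem map_one (hD : IsAddLeibniz D) : D 1 = 0 := by
  simpa using hD.map_mul 1 1

theorem map_neg (hD : IsAddLeibniz D) (x : R) : D (-x) = -D x := by
  have h := hD.map_add x (-x)
  rw [add_neg_cancel, hD.map_zero] at h
  exact (neg_eq_of_add_eq_zero_right h.symm).symm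

theorem map_sub (hD : IsAddLeibniz D) (x y : R) : D (x - y) = D x - D y := by
  rw [sub_eq_add_neg, hD.map_add, hD.map_neg, sub_eq_add_neg]

end Ring

theorem map_div {F : Type*} [Field F] {D : F → F} (hD : IsAddLeibniz D) (x : F) {y : F} (hy : y ≠ 0) :
    D (x / y) = (D x * y - x * D y) / y ^ 2 := by
  have hinv : D y⁻¹ = -D y / y ^ 2 := by
    have h := hD.map_mul y y⁻¹
    rw [mul_inv_cancel₀ hy, hD.map_one] at h
    rw [eq_div_iff (pow_ne_zero 2 hy)]
    linear_combination (-y) * h - D y * mul_inv_cancel₀ hy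
  rw [div_eq_mul_inv, hD.map_mul, hinv]
  field_simp
  ring

end IsAddLeibniz

theorem algebraMap_fractionRing_ne_zero {σ K : Type*} [Field K] {p : MvPolynomial σ K}
    (x : σ → K) (hp : eval x p ≠ 0) :
    algebraMap (MvPolynomial σ K) (FractionRing (MvPolynomial σ K)) p ≠ 0 :=
  (map_ne_zero_iff _ (IsFractionRing.injective _ _)).mpr fun h => hp (by simp [h])

theorem U1_mul_U2_add_one_ne_zero (K : Type) [Field K] : U1 K 0 * U2 K 0 + 1 ≠ 0 := by
  have h := algebraMap_fractionRing_ne_zero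
    (p := (X (some (some 0, 0)) * X (some (some 1, 0)) + 1 : PolyA K)) 0 (by simp)
  rwa [map_add, map_mul, map_one] at h

theorem lam_add_al_ne_zero (K : Type) [Field K] : lam K + al K 0 ≠ 0 := by
  have h := algebraMap_fractionRing_ne_zero
    (p := (X none + X (some (none, 0)) : PolyA K)) (fun v => if v = none then 1 else 0) (by simp)
  rwa [map_add] at h

theorem det_Mdtmv (K : Type) [Field K] (c : K) : (Mdtmv K c).det = lam K + al K 0 := by
  have := U1_mul_U2_add_one_ne_zero K
  rw [Mdtmv, Matrix.det_fin_two_of]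
  field_simp
  ring

theorem Mdtmv_map_eq_lax {K : Type} [Field K] (c : K) {D : FA K → FA K} (hD : IsAddLeibniz D)
    (hDK : ∀ x : K, D (algebraMap K (FA K) x) = 0) (hDlam : D (lam K) = 0)
    (hDal : D (al K 0) = 0) (hDu1 : D (U1 K 0) = Feq1 K c) (hDu2 : D (U2 K 0) = Feq2 K c)
    (S : FA K →+* FA K) (hSK : ∀ x : K, S (algebraMap K (FA K) x) = algebraMap K (FA K) x)
    (hSlam : S (lam K) = lam K) (hSu1 : S (U1 K 0) = U1 K 1) (hSu2 : S (U2 K (-1)) = U2 K 0) :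
    (Mdtmv K c).map D = (Udtmv K c).map S * Mdtmv K c - Mdtmv K c * Udtmv K c := by
  have hd := U1_mul_U2_add_one_ne_zero K
  have hd' : U2 K 0 * U1 K 0 + 1 ≠ 0 := mul_comm (U1 K 0) (U2 K 0) ▸ hd
  ext i j
  fin_cases i <;> fin_cases j <;>
    simp only [Mdtmv, Udtmv, Matrix.map_apply, Matrix.sub_apply, Matrix.mul_apply,
      Fin.sum_univ_two, Fin.isValue, Fin.mk_one, Fin.zero_eta, Matrix.of_apply, Matrix.cons_val',
      Matrix.cons_val_zero, Matrix.cons_val_one, Matrix.cons_val_fin_one,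
      map_sub, map_mul, map_neg, map_ofNat, hSK, hSlam, hSu1, hSu2,
      hD.map_div _ hd, hD.map_add, hD.map_sub, hD.map_mul, hD.map_one, hDK, hDlam, hDal, hDu1, hDu2,
      Feq1, Feq2] <;>
    field_simp <;> ring

theorem stmt_13_general (K : Type) [Field K] (c : K)
    (S : FA K ≃+* FA K)
    (hSK : ∀ x : K, S (algebraMap K (FA K) x) = algebraMap K (FA K) x)
    (hSlam : S (lam K) = lam K)
    (hSu1 : ∀ ℓ : ℤ, S (U1 K ℓ) = U1 K (ℓ + 1))
    (hSu2 : ∀ ℓ : ℤ, S (U2 K ℓ) = U2 K (ℓ + 1))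
    (Dt : FA K → FA K)
    (hDadd : ∀ x y, Dt (x + y) = Dt x + Dt y)
    (hDmul : ∀ x y, Dt (x * y) = x * Dt y + Dt x * y)
    (hDK : ∀ x : K, Dt (algebraMap K (FA K) x) = 0)
    (hDlam : Dt (lam K) = 0)
    (hDal : ∀ ℓ : ℤ, Dt (al K ℓ) = 0)
    (hDu1 : ∀ ℓ : ℤ, Dt (U1 K ℓ) = (S ^ ℓ) (Feq1 K c))
    (hDu2 : ∀ ℓ : ℤ, Dt (U2 K ℓ) = (S ^ ℓ) (Feq2 K c)) :
    (Mdtmv K c).det ≠ 0 ∧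
    (Mdtmv K c).map Dt = (Udtmv K c).map ⇑S * Mdtmv K c - Mdtmv K c * Udtmv K c := by
  refine ⟨det_Mdtmv K c ▸ lam_add_al_ne_zero K, ?_⟩
  exact Mdtmv_map_eq_lax c ⟨hDadd, hDmul⟩ hDK hDlam (hDal 0)
    (by simpa using hDu1 0) (by simpa using hDu2 0) S hSK hSlam
    (by simpa using hSu1 0) (by simpa using hSu2 (-1))

/-- `F` is the field of rational functions over a char-0 field `K` in `λ, α_ℓ, u¹_ℓ, u²_ℓ`;
`S` is the field automorphism over `K` fixing `λ` with `S(α_ℓ) = α_{ℓ+1}`,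
`S(u^j_ℓ) = u^j_{ℓ+1}`, and `D_t` is the total derivative of equation (dtmv)
`∂_t u^j = 𝔽^j` (the unique derivation with `D_t(λ) = 0`, `D_t(α_ℓ) = 0`,
`D_t(u^j_ℓ) = S^ℓ(𝔽^j)`); both are quantified by these characterizing properties.
Claim: the matrices `Mdtmv`, `Udtmv` form an MLR for (dtmv):
`det M ≠ 0` and `D_t(M) = S(U)·M − M·U`. -/
theorem stmt_13 (K : Type) [Field K] [CharZero K] (c : K)
    (S : FA K ≃+* FA K)
    (hSK : ∀ x : K, S (algebraMap K (FA K) x) = algebraMap K (FA K) x)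
    (hSlam : S (lam K) = lam K)
    (hSal : ∀ ℓ : ℤ, S (al K ℓ) = al K (ℓ + 1))
    (hSu1 : ∀ ℓ : ℤ, S (U1 K ℓ) = U1 K (ℓ + 1))
    (hSu2 : ∀ ℓ : ℤ, S (U2 K ℓ) = U2 K (ℓ + 1))
    (Dt : FA K → FA K)
    (hDadd : ∀ x y, Dt (x + y) = Dt x + Dt y)
    (hDmul : ∀ x y, Dt (x * y) = x * Dt y + Dt x * y)
    (hDK : ∀ x : K, Dt (algebraMap K (FA K) x) = 0)
    (hDlam : Dt (lam K) = 0)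
    (hDal : ∀ ℓ : ℤ, Dt (al K ℓ) = 0)
    (hDu1 : ∀ ℓ : ℤ, Dt (U1 K ℓ) = (S ^ ℓ) (Feq1 K c))
    (hDu2 : ∀ ℓ : ℤ, Dt (U2 K ℓ) = (S ^ ℓ) (Feq2 K c)) :
    (Mdtmv K c).det ≠ 0 ∧
    (Mdtmv K c).map Dt = (Udtmv K c).map ⇑S * Mdtmv K c - Mdtmv K c * Udtmv K c :=
  stmt_13_general K c S hSK hSlam hSu1 hSu2 Dt hDadd hDmul hDK hDlam hDal hDu1 hDu2
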